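/- Let Sⁱ (i = 1,…,N) be polyhedra in ℝⁿ (finite intersections of closed half-spaces) with nonempty intersection S. Then there exists α > 0 such that for all x ∈ ℝⁿ, dist(x, S) ≤ α · max_i dist(x, Sⁱ) (i.e., the tuple is linearly regular). -/

import Mathlib

/-!
Let `y` be the point of `P = {x | ∀ j, ⟪a j, x⟫ ≤ b j}` nearest to `x`. Every direction `d` with
`⟪a j, d⟫ ≤ 0` on the constraints active at `y` points into `P`, so `x - y` lies in the polar of
that cone. On such a polar cone the positive part of the active residuals vanishes only at `0`,
so by homogeneity and compactness of the unit sphere it dominates `‖x - y‖` up to a constant; since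
there are finitely many active sets, one constant serves all `x`. Finally each residual of a
constraint defining `Sⁱ` is at most `‖a j‖ · dist(x, Sⁱ)`.
-/

open scoped RealInnerProductSpace
open Filter Topology Metric

theorem exists_norm_le_mul_of_pos_homogeneous {F : Type*} [NormedAddCommGroup F]
    [NormedSpace ℝ F] [FiniteDimensional ℝ F] {K : Set F} (hK : IsClosed K)
    (hK_smul : ∀ v ∈ K, ∀ t : ℝ, 0 < t → t • v ∈ K) {f : F → ℝ} (hf : Continuous f)
    (hf_smul : ∀ v, ∀ t : ℝ, 0 < t → f (t • v) = t * f v) (hf_pos : ∀ v ∈ K, v ≠ 0 → 0 < f v) :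
    ∃ C : ℝ, 0 < C ∧ ∀ v ∈ K, ‖v‖ ≤ C * f v := by
  obtain ⟨m, hm, hmf⟩ := ((isCompact_sphere (0 : F) 1).inter_left hK).exists_forall_le'
    hf.continuousOn fun v hv => hf_pos v hv.1 (ne_zero_of_mem_unit_sphere ⟨v, hv.2⟩)
  refine ⟨m⁻¹, inv_pos.2 hm, fun v hv => ?_⟩
  rcases eq_or_ne v 0 with rfl | hv0
  · have hf0 : f 0 = 0 := by
      have h := hf_smul (0 : F) 2 two_pos
      rw [smul_zero] at h
      linarith
    simp [hf0]
  have hnorm : 0 < ‖v‖ := norm_pos_iff.2 hv0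
  have hunit : ‖v‖⁻¹ • v ∈ K ∩ sphere 0 1 :=
    ⟨hK_smul v hv _ (inv_pos.2 hnorm), by simp [norm_smul, hnorm.ne']⟩
  have := hmf _ hunit
  rw [hf_smul v _ (inv_pos.2 hnorm), le_inv_mul_iff₀ hnorm] at this
  rw [le_inv_mul_iff₀ hm, mul_comm]
  exact this

section Polyhedron

variable {E : Type*} [NormedAddCommGroup E] [InnerProductSpace ℝ E] {ι : Type*}

def polyhedron (a : ι → E) (b : ι → ℝ) : Set E := {x | ∀ j, ⟪a j, x⟫ ≤ b j}

theorem isClosed_polyhedron (a : ι → E) (b : ι → ℝ) : IsClosed (polyhedron a b) := by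
  simp only [polyhedron, Set.ofPred_forall]
  exact isClosed_iInter fun j => isClosed_le (continuous_const.inner continuous_id) continuous_const

theorem convex_polyhedron (a : ι → E) (b : ι → ℝ) : Convex ℝ (polyhedron a b) := by
  simp only [polyhedron, Set.ofPred_forall]
  exact convex_iInter fun j => convex_halfSpace_le (innerₛₗ ℝ (a j)).isLinear (b j)

noncomputable def activeSet [Fintype ι] (a : ι → E) (b : ι → ℝ) (y : E) : Finset ι :=
  {j | ⟪a j, y⟫ = b j}

theorem mem_activeSet [Fintype ι] {a : ι → E} {b : ι → ℝ} {y : E} {j : ι} :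
    j ∈ activeSet a b y ↔ ⟪a j, y⟫ = b j := by
  simp [activeSet]

/-- For `J` the active set at `y`, this is the normal cone of `polyhedron a b` at `y`. -/
def normalCone (a : ι → E) (J : Finset ι) : Set E :=
  {v | ∀ d, (∀ j ∈ J, ⟪a j, d⟫ ≤ 0) → ⟪v, d⟫ ≤ 0}

theorem isClosed_normalCone (a : ι → E) (J : Finset ι) : IsClosed (normalCone a J) := by
  simp only [normalCone, Set.ofPred_forall]
  exact isClosed_iInter fun d => isClosed_iInter fun _ =>
    isClosed_le (continuous_id.inner continuous_const) continuous_const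

theorem smul_mem_normalCone {a : ι → E} {J : Finset ι} {v : E} (hv : v ∈ normalCone a J)
    {t : ℝ} (ht : 0 < t) : t • v ∈ normalCone a J := fun d hd => by
  rw [real_inner_smul_left]
  exact mul_nonpos_of_nonneg_of_nonpos ht.le (hv d hd)

theorem sum_max_inner_pos_of_mem_normalCone {a : ι → E} {J : Finset ι} {v : E}
    (hv : v ∈ normalCone a J) (hv0 : v ≠ 0) : 0 < ∑ j ∈ J, max ⟪a j, v⟫ 0 := by
  by_contra! hsum
  have hJ : ∀ j ∈ J, ⟪a j, v⟫ ≤ 0 := fun j hj => (le_max_left _ _).trans <|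
    (Finset.single_le_sum (f := fun i => max ⟪a i, v⟫ 0) (fun i _ => le_max_right _ _) hj).trans hsum
  exact hv0 (real_inner_self_nonpos.1 (hv v hJ))

theorem exists_norm_le_mul_sum_max_inner [FiniteDimensional ℝ E] (a : ι → E) (J : Finset ι) :
    ∃ C : ℝ, 0 < C ∧ ∀ v ∈ normalCone a J, ‖v‖ ≤ C * ∑ j ∈ J, max ⟪a j, v⟫ 0 :=
  exists_norm_le_mul_of_pos_homogeneous (isClosed_normalCone a J)
    (fun _ hv _ ht => smul_mem_normalCone hv ht) (by fun_prop)
    (fun v t ht => by simp only [real_inner_smul_right, Finset.mul_sum, mul_max_of_nonneg _ _ ht.le,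
      mul_zero])
    (fun _ hv hv0 => sum_max_inner_pos_of_mem_normalCone hv hv0)

theorem exists_add_smul_mem_polyhedron [Fintype ι] {a : ι → E} {b : ι → ℝ} {y d : E}
    (hy : y ∈ polyhedron a b) (hd : ∀ j ∈ activeSet a b y, ⟪a j, d⟫ ≤ 0) :
    ∃ t : ℝ, 0 < t ∧ y + t • d ∈ polyhedron a b := by
  have hj : ∀ j, ∀ᶠ t in 𝓝[>] (0 : ℝ), ⟪a j, y + t • d⟫ ≤ b j := by
    intro j
    simp only [inner_add_right, real_inner_smul_right]
    by_cases hact : ⟪a j, y⟫ = b j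
    · refine eventually_nhdsWithin_of_forall fun t (ht : 0 < t) => ?_
      nlinarith [hd j (mem_activeSet.2 hact)]
    · have hlim : Tendsto (fun t : ℝ => ⟪a j, y⟫ + t * ⟪a j, d⟫) (𝓝[>] 0) (𝓝 ⟪a j, y⟫) := by
        refine Tendsto.mono_left ?_ nhdsWithin_le_nhds
        exact Continuous.tendsto' (by fun_prop) 0 _ (by simp)
      exact hlim.eventually (eventually_le_nhds (lt_of_le_of_ne (hy j) hact))
  obtain ⟨t, ht, htpos⟩ := ((eventually_all.2 hj).and self_mem_nhdsWithin).exists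
  exact ⟨t, htpos, ht⟩

theorem sub_mem_normalCone_of_infDist_eq [Fintype ι] {a : ι → E} {b : ι → ℝ} {x y : E}
    (hy : y ∈ polyhedron a b) (hxy : infDist x (polyhedron a b) = dist x y) :
    x - y ∈ normalCone a (activeSet a b y) := by
  intro d hd
  have hmin : ‖x - y‖ = ⨅ w : polyhedron a b, ‖x - w‖ := by
    simp only [← dist_eq_norm, ← hxy, infDist_eq_iInf]
  obtain ⟨t, ht, hyt⟩ := exists_add_smul_mem_polyhedron hy hd
  have := (norm_eq_iInf_iff_real_inner_le_zero (convex_polyhedron a b) hy).1 hmin _ hyt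
  rw [add_sub_cancel_left, real_inner_smul_right] at this
  exact nonpos_of_mul_nonpos_left (by linarith) ht

/-- Hoffman's error bound. -/
theorem exists_infDist_polyhedron_le [FiniteDimensional ℝ E] [Fintype ι] (a : ι → E)
    (b : ι → ℝ) (hne : (polyhedron a b).Nonempty) :
    ∃ C : ℝ, 0 < C ∧ ∀ x, infDist x (polyhedron a b) ≤ C * ∑ j, max (⟪a j, x⟫ - b j) 0 := by
  classical
  choose C hC_pos hC using exists_norm_le_mul_sum_max_inner a
  refine ⟨∑ J, C J, Finset.sum_pos (fun J _ => hC_pos J) Finset.univ_nonempty, fun x => ?_⟩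
  obtain ⟨y, hy, hxy⟩ := (isClosed_polyhedron a b).exists_infDist_eq_dist hne x
  set J := activeSet a b y
  have hres : ∑ j ∈ J, max ⟪a j, x - y⟫ 0 ≤ ∑ j, max (⟪a j, x⟫ - b j) 0 := calc
    ∑ j ∈ J, max ⟪a j, x - y⟫ 0 = ∑ j ∈ J, max (⟪a j, x⟫ - b j) 0 :=
      Finset.sum_congr rfl fun j hj => by rw [inner_sub_right, mem_activeSet.1 hj]
    _ ≤ _ := Finset.sum_le_sum_of_subset_of_nonneg (Finset.subset_univ J)
      fun _ _ _ => le_max_right _ _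
  calc infDist x (polyhedron a b) = ‖x - y‖ := by rw [hxy, dist_eq_norm]
    _ ≤ C J * ∑ j ∈ J, max ⟪a j, x - y⟫ 0 := hC J _ (sub_mem_normalCone_of_infDist_eq hy hxy)
    _ ≤ (∑ J, C J) * ∑ j, max (⟪a j, x⟫ - b j) 0 :=
      mul_le_mul (Finset.single_le_sum (fun J _ => (hC_pos J).le) (Finset.mem_univ J)) hres
        (Finset.sum_nonneg fun _ _ => le_max_right _ _)
        (Finset.sum_nonneg fun J _ => (hC_pos J).le)

end Polyhedron

theorem inner_sub_le_norm_mul_infDist {E : Type*} [NormedAddCommGroup E] [InnerProductSpace ℝ E]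
    [ProperSpace E] {S : Set E} (hS : IsClosed S) (hne : S.Nonempty) {a : E} {β : ℝ}
    (hSa : ∀ z ∈ S, ⟪a, z⟫ ≤ β) (x : E) : ⟪a, x⟫ - β ≤ ‖a‖ * infDist x S := by
  obtain ⟨z, hz, hxz⟩ := hS.exists_infDist_eq_dist hne x
  calc ⟪a, x⟫ - β ≤ ⟪a, x - z⟫ := by rw [inner_sub_right]; linarith [hSa z hz]
    _ ≤ ‖a‖ * ‖x - z‖ := real_inner_le_norm _ _
    _ = ‖a‖ * infDist x S := by rw [hxz, dist_eq_norm]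

theorem stmt14 {n N : ℕ} (hN : 0 < N) (S : Fin N → Set (EuclideanSpace ℝ (Fin n)))
    (hpoly : ∀ i, ∃ (m : ℕ) (A : Fin m → EuclideanSpace ℝ (Fin n)) (b : Fin m → ℝ),
      S i = {x | ∀ j, ⟪A j, x⟫ ≤ b j})
    (Sint : Set (EuclideanSpace ℝ (Fin n))) (hSint : Sint = ⋂ i, S i)
    (hSne : Sint.Nonempty) :
    ∃ α : ℝ, 0 < α ∧ ∀ x : EuclideanSpace ℝ (Fin n),
      Metric.infDist x Sint ≤
        α * (Finset.univ.sup' (Finset.univ_nonempty_iff.mpr ⟨⟨0, hN⟩⟩)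
          fun i => Metric.infDist x (S i)) := by
  choose m A b hS using hpoly
  set a : (Σ i, Fin (m i)) → EuclideanSpace ℝ (Fin n) := fun p => A p.1 p.2
  set c : (Σ i, Fin (m i)) → ℝ := fun p => b p.1 p.2
  have hSint_eq : Sint = polyhedron a c := by
    ext x
    simp [hSint, hS, polyhedron, Sigma.forall, a, c]
  obtain ⟨C, hC, hHoffman⟩ := exists_infDist_polyhedron_le a c (hSint_eq ▸ hSne)
  refine ⟨C * ∑ p, ‖a p‖ + 1, by positivity, fun x => ?_⟩
  set M := Finset.univ.sup' (Finset.univ_nonempty_iff.mpr ⟨⟨0, hN⟩⟩) fun i => infDist x (S i)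
  have hM : 0 ≤ M :=
    infDist_nonneg.trans (Finset.le_sup' (fun i => infDist x (S i)) (Finset.mem_univ ⟨0, hN⟩))
  have hres : ∀ p, max (⟪a p, x⟫ - c p) 0 ≤ ‖a p‖ * M := fun ⟨i, j⟩ => by
    refine max_le ?_ (by positivity)
    have hSi_ne : (S i).Nonempty := hSne.mono (hSint ▸ Set.iInter_subset S i)
    refine (inner_sub_le_norm_mul_infDist (hS i ▸ isClosed_polyhedron (A i) (b i)) hSi_ne
      (fun z hz => by rw [hS i] at hz; exact hz j) x).trans ?_
    exact mul_le_mul_of_nonneg_left (Finset.le_sup' (fun i => infDist x (S i))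
      (Finset.mem_univ i)) (norm_nonneg _)
  calc infDist x Sint ≤ C * ∑ p, max (⟪a p, x⟫ - c p) 0 := hSint_eq ▸ hHoffman x
    _ ≤ C * ∑ p, ‖a p‖ * M := by gcongr with p; exact hres p
    _ ≤ (C * ∑ p, ‖a p‖ + 1) * M := by rw [← Finset.sum_mul]; nlinarith
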